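/- Let σ, ρ, ω be real numbers with 0 < σ < 1, and for y > 0 set h(y) = y^{iω/2} · Σ_{n=1}^∞ (-1)^{n+1} n^{-1} (y/n)^{iω/2} (y/n)^{-σ+iρ}. Then for every real x > 0, the series x^{-iω/2} · Σ_{m=1}^∞ (-1)^{m+1} (m·x)^{-iω/2} · h(m·x) converges (as the limit of its partial sums) and its sum equals (1 - 2^{σ-i(ρ+ω/2)}) · (1 - 2^{(1-σ)+i(ρ+ω/2)}) · ζ(σ - i(ρ + ω/2)) · ζ(1 - σ + i(ρ + ω/2)) · x^{-σ+iρ}. -/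

import Mathlib

/-!
Writing `y / n` and `n * x` as products of powers, both `A†(ω)` and `A(ω)` reduce to multiples of
partial sums of the alternating series `η(s) = ∑ (-1)^(n+1) n^(-s)`: first at
`s = 1 - σ + i(ρ + ω/2)`, then at `s = σ - i(ρ + ω/2)`, both in the strip `0 < Re s < 1`.
There the partial sums converge because consecutive terms pair up into an absolutely summable
series (mean value theorem) while the terms tend to `0`. Their limit is `(1 - 2^(1-s)) ζ(s)`:
for `Re s > 1` split the series into even and odd `n`; the identity theorem then extends
`(s - 1) η(s) = (s - 1) ζ(s) (1 - 2^(1-s))` to `Re s > 0`, where both sides are holomorphic.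
-/

open Filter Finset Complex Topology

noncomputable def etaTerm (s : ℂ) (n : ℕ) : ℂ := (-1) ^ n * ((n + 1 : ℕ) : ℂ) ^ (-s)

noncomputable def etaPair (s : ℂ) (k : ℕ) : ℂ := etaTerm s (2 * k) + etaTerm s (2 * k + 1)

noncomputable def dirichletEta (s : ℂ) : ℂ := ∑' k, etaPair s k

lemma etaPair_eq (s : ℂ) (k : ℕ) :
    etaPair s k = ((2 * k + 1 : ℕ) : ℂ) ^ (-s) - ((2 * k + 2 : ℕ) : ℂ) ^ (-s) := by
  simp [etaPair, etaTerm, pow_succ, pow_mul, sub_eq_add_neg, add_assoc]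

lemma norm_ofReal_cpow_neg_sub_le {s : ℂ} (hs : -1 ≤ s.re) {a b : ℝ} (ha : 0 < a) (hab : a ≤ b) :
    ‖(b : ℂ) ^ (-s) - (a : ℂ) ^ (-s)‖ ≤ ‖s‖ * a ^ (-s.re - 1) * (b - a) := by
  have hderiv : ∀ x ∈ Set.Icc a b, HasDerivWithinAt (fun y : ℝ => (y : ℂ) ^ (-s))
      (-s * (x : ℂ) ^ (-s - 1)) (Set.Icc a b) x := fun x hx => by
    simpa using (((hasDerivAt_id (x : ℂ)).cpow_const (c := -s)
      (by simp [ha.trans_le hx.1])).comp_ofReal).hasDerivWithinAt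
  have hbound : ∀ x ∈ Set.Ico a b, ‖-s * (x : ℂ) ^ (-s - 1)‖ ≤ ‖s‖ * a ^ (-s.re - 1) := by
    intro x hx
    rw [norm_mul, norm_neg, norm_cpow_eq_rpow_re_of_pos (ha.trans_le hx.1)]
    refine mul_le_mul_of_nonneg_left ?_ (norm_nonneg s)
    simpa using Real.rpow_le_rpow_of_nonpos ha hx.1 (by linarith)
  exact norm_image_sub_le_of_norm_deriv_le_segment' hderiv hbound b (Set.right_mem_Icc.2 hab)

lemma norm_etaPair_le {s : ℂ} (hs : -1 ≤ s.re) (k : ℕ) :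
    ‖etaPair s k‖ ≤ ‖s‖ * (2 * k + 1 : ℝ) ^ (-s.re - 1) := by
  have h := norm_ofReal_cpow_neg_sub_le hs (a := 2 * k + 1) (b := 2 * k + 2) (by positivity)
    (by linarith)
  calc ‖etaPair s k‖ = ‖((2 * k + 2 : ℝ) : ℂ) ^ (-s) - ((2 * k + 1 : ℝ) : ℂ) ^ (-s)‖ := by
        rw [etaPair_eq, norm_sub_rev]; push_cast; rfl
    _ ≤ _ := h
    _ = _ := by ring

lemma summable_two_mul_add_one_rpow {δ : ℝ} (hδ : 0 < δ) :
    Summable (fun k : ℕ => (2 * k + 1 : ℝ) ^ (-δ - 1)) := by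
  have hsucc : Summable (fun k : ℕ => ((k + 1 : ℕ) : ℝ) ^ (-δ - 1)) :=
    (summable_nat_add_iff 1).2 (Real.summable_nat_rpow.2 (by linarith))
  refine hsucc.of_nonneg_of_le (fun k => by positivity) fun k => ?_
  exact Real.rpow_le_rpow_of_nonpos (by positivity) (by push_cast; linarith) (by linarith)

lemma summable_etaPair {s : ℂ} (hs : 0 < s.re) : Summable (etaPair s) :=
  .of_norm_bounded ((summable_two_mul_add_one_rpow hs).mul_left ‖s‖)
    (norm_etaPair_le (by linarith))

lemma sum_range_two_mul_etaTerm (s : ℂ) (N : ℕ) :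
    ∑ n ∈ range (2 * N), etaTerm s n = ∑ k ∈ range N, etaPair s k := by
  induction N with
  | zero => simp
  | succ N ih => rw [mul_add_one, sum_range_succ, sum_range_succ, sum_range_succ, ih, etaPair,
      add_assoc]

lemma tendsto_etaTerm_zero {s : ℂ} (hs : 0 < s.re) : Tendsto (etaTerm s) atTop (𝓝 0) := by
  rw [tendsto_zero_iff_norm_tendsto_zero]
  have hnorm (n : ℕ) : ‖etaTerm s n‖ = ((n : ℝ) + 1) ^ (-s.re) := by
    rw [etaTerm, norm_mul, norm_pow, norm_neg, norm_one, one_pow, one_mul,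
      ← ofReal_natCast, norm_cpow_eq_rpow_re_of_pos (by positivity)]
    simp
  simp_rw [hnorm]
  exact (tendsto_rpow_neg_atTop hs).comp
    (tendsto_atTop_add_const_right _ 1 tendsto_natCast_atTop_atTop)

lemma tendsto_of_tendsto_even_of_tendsto_odd {X : Type*} [TopologicalSpace X] {f : ℕ → X} {l : X}
    (he : Tendsto (fun k => f (2 * k)) atTop (𝓝 l))
    (ho : Tendsto (fun k => f (2 * k + 1)) atTop (𝓝 l)) : Tendsto f atTop (𝓝 l) := by
  rw [tendsto_atTop'] at he ho ⊢
  intro u hu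
  obtain ⟨K₁, hK₁⟩ := he u hu
  obtain ⟨K₂, hK₂⟩ := ho u hu
  refine ⟨2 * max K₁ K₂, fun n hn => ?_⟩
  obtain ⟨k, rfl | rfl⟩ := Nat.even_or_odd' n
  · exact hK₁ k (by omega)
  · exact hK₂ k (by omega)

theorem tendsto_sum_range_etaTerm {s : ℂ} (hs : 0 < s.re) :
    Tendsto (fun N => ∑ n ∈ range N, etaTerm s n) atTop (𝓝 (dirichletEta s)) := by
  have heven : Tendsto (fun K => ∑ n ∈ range (2 * K), etaTerm s n) atTop (𝓝 (dirichletEta s)) := by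
    simpa only [sum_range_two_mul_etaTerm, dirichletEta] using
      (summable_etaPair hs).hasSum.tendsto_sum_nat
  have hodd := heven.add ((tendsto_etaTerm_zero hs).comp (tendsto_id.const_mul_atTop' two_pos))
  rw [add_zero] at hodd
  exact tendsto_of_tendsto_even_of_tendsto_odd heven (by simpa [sum_range_succ] using hodd)

lemma differentiable_etaPair (k : ℕ) : Differentiable ℂ (fun s => etaPair s k) := by
  simp_rw [etaPair_eq]
  exact (differentiable_neg.const_cpow (.inl (Nat.cast_ne_zero.2 (by omega)))).sub
    (differentiable_neg.const_cpow (.inl (Nat.cast_ne_zero.2 (by omega))))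

lemma differentiableOn_dirichletEta : DifferentiableOn ℂ dirichletEta {s | 0 < s.re} := by
  intro s₀ hs₀
  set V : Set ℂ := {s | s₀.re / 2 < s.re} ∩ Metric.ball 0 (‖s₀‖ + 1)
  have hV : IsOpen V := (isOpen_lt continuous_const continuous_re).inter Metric.isOpen_ball
  have hre₀ : 0 < s₀.re := hs₀
  have hs₀V : s₀ ∈ V := ⟨show s₀.re / 2 < s₀.re by linarith, by simp⟩
  have hbound (k : ℕ) (s : ℂ) (hs : s ∈ V) :
      ‖etaPair s k‖ ≤ (‖s₀‖ + 1) * (2 * k + 1 : ℝ) ^ (-(s₀.re / 2) - 1) := by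
    have hre : s₀.re / 2 < s.re := hs.1
    refine (norm_etaPair_le (by linarith) k).trans (mul_le_mul ?_ ?_ ?_ ?_)
    · simpa using (Metric.mem_ball.1 hs.2).le
    · exact Real.rpow_le_rpow_of_exponent_le (by linarith [k.cast_nonneg (α := ℝ)])
        (by linarith)
    · positivity
    · positivity
  have hdiff : DifferentiableOn ℂ dirichletEta V :=
    differentiableOn_tsum_of_summable_norm
      ((summable_two_mul_add_one_rpow (half_pos hre₀)).mul_left _)
      (fun k => (differentiable_etaPair k).differentiableOn) hV hbound
  exact (hdiff.differentiableAt (hV.mem_nhds hs₀V)).differentiableWithinAt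

lemma hasSum_etaPair {s : ℂ} (hs : 1 < s.re) :
    HasSum (etaPair s) ((1 - 2 ^ (1 - s)) * riemannZeta s) := by
  set f : ℕ → ℂ := fun n => ((n + 1 : ℕ) : ℂ) ^ (-s)
  have hf : HasSum f (riemannZeta s) := by
    have hsum : Summable f := by
      simpa [f, cpow_neg] using (summable_nat_add_iff 1).2 (summable_one_div_nat_cpow.2 hs)
    simpa [f, zeta_eq_tsum_one_div_nat_add_one_cpow hs, cpow_neg] using hsum.hasSum
  have hodd : HasSum (fun k => f (2 * k + 1)) (2 ^ (-s) * riemannZeta s) := by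
    refine (hf.mul_left _).congr_fun fun k => ?_
    simp only [f, show 2 * k + 1 + 1 = 2 * (k + 1) by ring, Nat.cast_mul, Nat.cast_ofNat]
    exact natCast_mul_natCast_cpow 2 (k + 1) (-s)
  obtain ⟨A, heven⟩ := hf.summable.comp_injective (mul_right_injective₀ two_ne_zero)
  have hA : A = riemannZeta s - 2 ^ (-s) * riemannZeta s := by
    linear_combination (heven.even_add_odd hodd).unique hf
  have htwo : (2 : ℂ) ^ (1 - s) = 2 * 2 ^ (-s) := by
    rw [sub_eq_add_neg, cpow_add _ _ two_ne_zero, cpow_one]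
  have hval : (1 - 2 ^ (1 - s)) * riemannZeta s = A - 2 ^ (-s) * riemannZeta s := by
    rw [hA, htwo]; ring
  rw [hval]
  refine (heven.sub hodd).congr_fun fun k => ?_
  simp only [etaPair_eq, f, Function.comp_apply]

lemma sub_one_mul_dirichletEta {s : ℂ} (hs : 0 < s.re) :
    (s - 1) * dirichletEta s = riemannZeta₁ s * (1 - 2 ^ (1 - s)) := by
  have htwo : Differentiable ℂ (fun s : ℂ => (2 : ℂ) ^ (1 - s)) := by
    fun_prop (disch := norm_num)
  have hU : IsOpen {s : ℂ | 0 < s.re} := isOpen_lt continuous_const continuous_re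
  refine AnalyticOnNhd.eqOn_of_preconnected_of_eventuallyEq (z₀ := 2)
    (((differentiable_id.sub_const 1).differentiableOn.mul
      differentiableOn_dirichletEta).analyticOnNhd hU)
    ((differentiable_riemannZeta₁.mul ((differentiable_const 1).sub htwo)).differentiableOn
      |>.analyticOnNhd hU)
    (convex_halfSpace_re_gt 0).isPreconnected (by simp) ?_ hs
  filter_upwards [(isOpen_lt continuous_const continuous_re).mem_nhds
    (show (1 : ℝ) < (2 : ℂ).re by simp)] with s hs
  have hs1 : s ≠ 1 := by rintro rfl; simp at hs
  show (s - 1) * dirichletEta s = riemannZeta₁ s * (1 - 2 ^ (1 - s))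
  rw [show dirichletEta s = _ from (hasSum_etaPair hs).tsum_eq, riemannZeta_eq_inv_sub_mul hs1]
  field_simp [sub_ne_zero.2 hs1]

theorem dirichletEta_eq {s : ℂ} (hs : 0 < s.re) (hs1 : s ≠ 1) :
    dirichletEta s = (1 - 2 ^ (1 - s)) * riemannZeta s := by
  have := sub_one_mul_dirichletEta hs
  rw [riemannZeta_eq_inv_sub_mul hs1]
  field_simp [sub_ne_zero.2 hs1]
  linear_combination this

theorem tendsto_sum_range_etaTerm_of_ne_one {s : ℂ} (hs : 0 < s.re) (hs1 : s ≠ 1) :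
    Tendsto (fun N => ∑ n ∈ range N, etaTerm s n) atTop
      (𝓝 ((1 - 2 ^ (1 - s)) * riemannZeta s)) :=
  dirichletEta_eq hs hs1 ▸ tendsto_sum_range_etaTerm hs

lemma ofReal_div_natCast_cpow {y : ℝ} (hy : 0 ≤ y) (n : ℕ) (c : ℂ) :
    ((y / n : ℝ) : ℂ) ^ c = (y : ℂ) ^ c / (n : ℂ) ^ c := by
  rw [ofReal_div, div_cpow_ofReal_nonneg hy n.cast_nonneg, ofReal_natCast]

lemma ofReal_natCast_mul_cpow {x : ℝ} (hx : 0 ≤ x) (n : ℕ) (c : ℂ) :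
    ((n * x : ℝ) : ℂ) ^ c = (n : ℂ) ^ c * (x : ℂ) ^ c := by
  rw [ofReal_mul, mul_cpow_ofReal_nonneg n.cast_nonneg hx, ofReal_natCast]

lemma summand_div_eq_etaTerm {y : ℝ} (hy : 0 < y) (c d : ℂ) (n : ℕ) :
    (-1 : ℂ) ^ n * ((n + 1 : ℕ) : ℂ)⁻¹ * (((y / ((n + 1 : ℕ) : ℝ)) : ℝ) : ℂ) ^ c *
        (((y / ((n + 1 : ℕ) : ℝ)) : ℝ) : ℂ) ^ d =
      (y : ℂ) ^ (c + d) * etaTerm (1 + c + d) n := by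
  have hn : ((n + 1 : ℕ) : ℂ) ≠ 0 := Nat.cast_ne_zero.2 n.succ_ne_zero
  rw [ofReal_div_natCast_cpow hy.le, ofReal_div_natCast_cpow hy.le, etaTerm, cpow_neg,
    cpow_add _ _ hn, cpow_add _ _ hn, cpow_one, cpow_add _ _ (ofReal_ne_zero.2 hy.ne')]
  ring

lemma summand_mul_eq_etaTerm {x : ℝ} (hx : 0 < x) (c d E : ℂ) (m : ℕ) :
    (-1 : ℂ) ^ m * ((((m + 1 : ℕ) : ℝ) * x : ℝ) : ℂ) ^ (-c) *
        (((((m + 1 : ℕ) : ℝ) * x : ℝ) : ℂ) ^ c *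
          (((((m + 1 : ℕ) : ℝ) * x : ℝ) : ℂ) ^ (c + d) * E)) =
      (x : ℂ) ^ (c + d) * E * etaTerm (-(c + d)) m := by
  have hu : ((((m + 1 : ℕ) : ℝ) * x : ℝ) : ℂ) ^ c ≠ 0 :=
    cpow_ne_zero_iff.2 (.inl (ofReal_ne_zero.2 (by positivity)))
  rw [cpow_neg, mul_assoc, inv_mul_cancel_left₀ hu, ofReal_natCast_mul_cpow hx.le, etaTerm, neg_neg]
  ring

/-- Action of the supersymmetric partner Hamiltonian `H₊ = A(ω) A†(ω)` on `x^{-σ+iρ}`.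
Here `h` is the result of applying `A†(ω)` to `x^{-σ+iρ}` (defined for `y > 0` as the limit of
the partial sums), and the claim is that applying `A(ω)` to `h` gives a convergent series
whose sum is
`(1 - 2^{σ-i(ρ+ω/2)})(1 - 2^{(1-σ)+i(ρ+ω/2)}) ζ(σ-i(ρ+ω/2)) ζ(1-σ+i(ρ+ω/2)) x^{-σ+iρ}`. -/
theorem Hplus_action (σ ρ ω : ℝ) (h0 : 0 < σ) (h1 : σ < 1) (h : ℝ → ℂ)
    (hh : ∀ y : ℝ, 0 < y →
      Filter.Tendsto
        (fun N : ℕ => (y : ℂ) ^ (Complex.I * (ω : ℂ) / 2) *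
          ∑ n ∈ Finset.range N, (-1 : ℂ) ^ n * ((n + 1 : ℕ) : ℂ)⁻¹ *
            (((y / ((n + 1 : ℕ) : ℝ)) : ℝ) : ℂ) ^ (Complex.I * (ω : ℂ) / 2) *
            (((y / ((n + 1 : ℕ) : ℝ)) : ℝ) : ℂ) ^ (-(σ : ℂ) + Complex.I * (ρ : ℂ)))
        Filter.atTop (nhds (h y)))
    (x : ℝ) (hx : 0 < x) :
    Filter.Tendsto
      (fun N : ℕ => (x : ℂ) ^ (-(Complex.I * (ω : ℂ)) / 2) *
        ∑ m ∈ Finset.range N, (-1 : ℂ) ^ m *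
          ((((m + 1 : ℕ) : ℝ) * x : ℝ) : ℂ) ^ (-(Complex.I * (ω : ℂ)) / 2) *
          h (((m + 1 : ℕ) : ℝ) * x))
      Filter.atTop
      (nhds ((1 - (2 : ℂ) ^ ((σ : ℂ) - Complex.I * ((ρ : ℂ) + (ω : ℂ) / 2))) *
        (1 - (2 : ℂ) ^ ((1 - (σ : ℂ)) + Complex.I * ((ρ : ℂ) + (ω : ℂ) / 2))) *
        riemannZeta ((σ : ℂ) - Complex.I * ((ρ : ℂ) + (ω : ℂ) / 2)) *
        riemannZeta (1 - (σ : ℂ) + Complex.I * ((ρ : ℂ) + (ω : ℂ) / 2)) *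
        (x : ℂ) ^ (-(σ : ℂ) + Complex.I * (ρ : ℂ)))) := by
  set c : ℂ := I * ω / 2
  set d : ℂ := -σ + I * ρ
  have hre : (1 + c + d).re = 1 - σ ∧ (-(c + d)).re = σ := by simp [c, d, sub_eq_add_neg]
  rw [show -(I * ω) / 2 = -c by ring, show 1 - σ + I * (ρ + ω / 2) = 1 + c + d by ring,
    show σ - I * (ρ + ω / 2) = -(c + d) by ring]
  have hinner := tendsto_sum_range_etaTerm_of_ne_one (s := 1 + c + d) (by linarith)
    (ne_of_apply_ne re (by rw [hre.1, one_re]; linarith))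
  have houter := tendsto_sum_range_etaTerm_of_ne_one (s := -(c + d)) (by linarith)
    (ne_of_apply_ne re (by rw [hre.2, one_re]; linarith))
  set E := (1 - 2 ^ (1 - (1 + c + d))) * riemannZeta (1 + c + d)
  have hE (y : ℝ) (hy : 0 < y) : h y = (y : ℂ) ^ c * ((y : ℂ) ^ (c + d) * E) :=
    tendsto_nhds_unique (hh y hy) <| by
      simpa only [summand_div_eq_etaTerm hy, ← mul_sum] using
        (hinner.const_mul ((y : ℂ) ^ (c + d))).const_mul ((y : ℂ) ^ c)
  have hxpow : (x : ℂ) ^ (-c) * (x : ℂ) ^ (c + d) = (x : ℂ) ^ d := by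
    rw [← cpow_add _ _ (ofReal_ne_zero.2 hx.ne')]; ring_nf
  convert houter.const_mul ((x : ℂ) ^ (-c) * ((x : ℂ) ^ (c + d) * E)) using 2
  · rw [mul_assoc]
    congr 1
    rw [mul_sum]
    refine sum_congr rfl fun m _ => ?_
    rw [hE _ (by positivity), summand_mul_eq_etaTerm hx]
  · simp only [E, show 1 - (1 + c + d) = -(c + d) by ring, show 1 - -(c + d) = 1 + c + d by ring,
      ← hxpow]
    ring
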